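/- If a connected graph G contains a vertex adjacent to at least three pendant vertices (vertices of degree 1), then G has no m-resolving set, i.e., md(G) = ∞. -/

import Mathlib

open SimpleGraph

/-- The multiset of distances from `v` to the vertices of `W`. -/
noncomputable def mrep {V : Type*} (G : SimpleGraph V) (W : Finset V) (v : V) : Multiset ℕ :=
  W.val.map (fun w => G.dist v w)

/-- `W` is an m-resolving set of `G`: distinct vertices have distinct
representation multisets. -/
def IsMResolving {V : Type*} (G : SimpleGraph V) (W : Finset V) : Prop :=
  ∀ u v : V, u ≠ v → mrep G W u ≠ mrep G W v

/-- The multiset dimension of `G`, equal to `⊤` if `G` has no m-resolving set. -/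
noncomputable def mdim {V : Type*} (G : SimpleGraph V) : ℕ∞ :=
  ⨅ W : {W : Finset V // IsMResolving G W}, (W.1.card : ℕ∞)

/-!
Swapping two twin vertices `u`, `v` is an automorphism of `G`, so it preserves distances. If `W`
contains both or neither of `u` and `v`, the swap also fixes `W`, hence `u` and `v` have the same
multiset representation. Pendant vertices at a common vertex are twins, and of any three of them
two lie on the same side of `W`.
-/

namespace SimpleGraph

variable {V V' : Type*} {G : SimpleGraph V} {G' : SimpleGraph V'}

theorem Hom.edist_map_le (f : G →g G') (u v : V) : G'.edist (f u) (f v) ≤ G.edist u v :=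
  le_iInf fun p => Walk.length_map f p ▸ edist_le (p.map f)

theorem Iso.edist_map (f : G ≃g G') (u v : V) : G'.edist (f u) (f v) = G.edist u v := by
  refine le_antisymm (Hom.edist_map_le f.toHom u v) ?_
  simpa using Hom.edist_map_le f.symm.toHom (f u) (f v)

theorem Iso.dist_map (f : G ≃g G') (u v : V) : G'.dist (f u) (f v) = G.dist u v := by
  rw [dist, dist, f.edist_map]

theorem Iso.mrep_map (σ : G ≃g G) (W : Finset V) (v : V) :
    mrep G (W.map σ.toEquiv.toEmbedding) (σ v) = mrep G W v := by
  simp [mrep, Multiset.map_map, σ.dist_map]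

def IsTwin (G : SimpleGraph V) (u v : V) : Prop :=
  ∀ x, x ≠ u → x ≠ v → (G.Adj u x ↔ G.Adj v x)

theorem adj_iff_eq_of_degree_eq_one {p c x : V} [Fintype (G.neighborSet p)]
    (hp : G.degree p = 1) (hpc : G.Adj p c) : G.Adj p x ↔ x = c :=
  ⟨fun hpx => (degree_eq_one_iff_existsUnique_adj.mp hp).unique hpx hpc, fun hxc => hxc ▸ hpc⟩

theorem isTwin_of_degree_eq_one {c p q : V} [Fintype (G.neighborSet p)]
    [Fintype (G.neighborSet q)] (hp : G.degree p = 1) (hq : G.degree q = 1) (hcp : G.Adj c p)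
    (hcq : G.Adj c q) : G.IsTwin p q := fun _ _ _ => by
  rw [adj_iff_eq_of_degree_eq_one hp hcp.symm, adj_iff_eq_of_degree_eq_one hq hcq.symm]

variable [DecidableEq V] {u v : V}

def IsTwin.swapIso (h : G.IsTwin u v) : G ≃g G where
  toEquiv := Equiv.swap u v
  map_rel_iff' := by
    intro a b
    simp only [Equiv.swap_apply_def]
    split_ifs <;> subst_vars <;> grind [IsTwin, G.adj_comm, G.irrefl]

theorem _root_.Finset.map_swap_eq_self {W : Finset V} (hW : u ∈ W ↔ v ∈ W) :
    W.map (Equiv.swap u v).toEmbedding = W := by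
  ext a
  rw [Finset.mem_map_equiv, Equiv.symm_swap, Equiv.swap_apply_def]
  split_ifs <;> grind

theorem IsTwin.mrep_eq (h : G.IsTwin u v) {W : Finset V} (hW : u ∈ W ↔ v ∈ W) :
    mrep G W u = mrep G W v := by
  rw [← h.swapIso.mrep_map W u]
  show mrep G (W.map (Equiv.swap u v).toEmbedding) (Equiv.swap u v u) = _
  rw [Finset.map_swap_eq_self hW, Equiv.swap_apply_left]

theorem IsTwin.not_isMResolving (h : G.IsTwin u v) (huv : u ≠ v) {W : Finset V}
    (hW : u ∈ W ↔ v ∈ W) : ¬IsMResolving G W :=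
  fun hres => hres u v huv (h.mrep_eq hW)

end SimpleGraph

theorem mdim_eq_top_iff {V : Type*} {G : SimpleGraph V} :
    mdim G = ⊤ ↔ ∀ W : Finset V, ¬IsMResolving G W := by
  simp [mdim, iInf_eq_top]

theorem stmt_11_general {V : Type*} [Fintype V] [DecidableEq V] (G : SimpleGraph V)
    [DecidableRel G.Adj] (c p₁ p₂ p₃ : V)
    (h12 : p₁ ≠ p₂) (h13 : p₁ ≠ p₃) (h23 : p₂ ≠ p₃)
    (a1 : G.Adj c p₁) (a2 : G.Adj c p₂) (a3 : G.Adj c p₃)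
    (d1 : G.degree p₁ = 1) (d2 : G.degree p₂ = 1) (d3 : G.degree p₃ = 1) :
    (∀ W : Finset V, ¬ IsMResolving G W) ∧ mdim G = ⊤ := by
  have hW : ∀ W : Finset V, ¬ IsMResolving G W := by
    intro W
    rcases (by tauto : (p₁ ∈ W ↔ p₂ ∈ W) ∨ (p₁ ∈ W ↔ p₃ ∈ W) ∨ (p₂ ∈ W ↔ p₃ ∈ W))
      with h | h | h
    · exact (isTwin_of_degree_eq_one d1 d2 a1 a2).not_isMResolving h12 h
    · exact (isTwin_of_degree_eq_one d1 d3 a1 a3).not_isMResolving h13 h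
    · exact (isTwin_of_degree_eq_one d2 d3 a2 a3).not_isMResolving h23 h
  exact ⟨hW, mdim_eq_top_iff.mpr hW⟩

theorem stmt_11 {V : Type*} [Fintype V] [DecidableEq V] (G : SimpleGraph V)
    [DecidableRel G.Adj] (hG : G.Connected) (c p₁ p₂ p₃ : V)
    (h12 : p₁ ≠ p₂) (h13 : p₁ ≠ p₃) (h23 : p₂ ≠ p₃)
    (a1 : G.Adj c p₁) (a2 : G.Adj c p₂) (a3 : G.Adj c p₃)
    (d1 : G.degree p₁ = 1) (d2 : G.degree p₂ = 1) (d3 : G.degree p₃ = 1) :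
    (∀ W : Finset V, ¬ IsMResolving G W) ∧ mdim G = ⊤ :=
  stmt_11_general G c p₁ p₂ p₃ h12 h13 h23 a1 a2 a3 d1 d2 d3
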